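/- Let Σ = (G, σ) be a signed graph whose underlying simple graph G is connected and bipartite. Then Σ is balanced if and only if D^max(Σ) = D^min(Σ). -/

import Mathlib

open SimpleGraph

/-- The sign (product of edge signs) of a walk in a graph, computed along its darts. -/
def walkSign {V : Type*} {G : SimpleGraph V} (σ : V → V → ℤ) {u v : V} (p : G.Walk u v) : ℤ :=
  (p.darts.map fun d => σ d.toProd.1 d.toProd.2).prod

/-- `σ` is a signature on `G`: a symmetric function that is `±1`-valued on edges. -/
def IsSignature {V : Type*} (G : SimpleGraph V) (σ : V → V → ℤ) : Prop :=
  (∀ u v, σ u v = σ v u) ∧ ∀ u v, G.Adj u v → σ u v = 1 ∨ σ u v = -1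

/-- A signed graph is balanced when every cycle has sign `+1`. -/
def IsBalanced {V : Type*} (G : SimpleGraph V) (σ : V → V → ℤ) : Prop :=
  ∀ (u : V) (p : G.Walk u u), p.IsCycle → walkSign σ p = 1

/-- A walk is a shortest path when it is a path whose length is the graph distance
between its endpoints. -/
def IsShortestPath {V : Type*} {G : SimpleGraph V} {u v : V} (p : G.Walk u v) : Prop :=
  p.IsPath ∧ p.length = G.dist u v

open scoped Classical in
/-- `σmax u v = +1` if some shortest `u v`-path is positive, `-1` otherwise. -/
noncomputable def sigmaMax {V : Type*} (G : SimpleGraph V) (σ : V → V → ℤ) (u v : V) : ℤ :=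
  if ∃ p : G.Walk u v, IsShortestPath p ∧ walkSign σ p = 1 then 1 else -1

open scoped Classical in
/-- `σmin u v = +1` if all shortest `u v`-paths are positive, `-1` otherwise. -/
noncomputable def sigmaMin {V : Type*} (G : SimpleGraph V) (σ : V → V → ℤ) (u v : V) : ℤ :=
  if ∀ p : G.Walk u v, IsShortestPath p → walkSign σ p = 1 then 1 else -1

/-- The signed distance matrix `D^max`, with `(u,v)` entry `σmax(u,v)·d(u,v)`. -/
noncomputable def Dmax {V : Type*} (G : SimpleGraph V) (σ : V → V → ℤ) : Matrix V V ℝ :=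
  Matrix.of fun u v => (sigmaMax G σ u v : ℝ) * (G.dist u v : ℝ)

/-- The signed distance matrix `D^min`, with `(u,v)` entry `σmin(u,v)·d(u,v)`. -/
noncomputable def Dmin {V : Type*} (G : SimpleGraph V) (σ : V → V → ℤ) : Matrix V V ℝ :=
  Matrix.of fun u v => (sigmaMin G σ u v : ℝ) * (G.dist u v : ℝ)

/-- Two vertices are distance-compatible if all shortest paths between them have the
same sign. -/
def Compatible {V : Type*} (G : SimpleGraph V) (σ : V → V → ℤ) (u v : V) : Prop :=
  ∀ p q : G.Walk u v, IsShortestPath p → IsShortestPath q → walkSign σ p = walkSign σ q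

/-- A signed graph is distance-compatible if every pair of vertices is
distance-compatible. -/
def IsCompatibleGraph {V : Type*} (G : SimpleGraph V) (σ : V → V → ℤ) : Prop :=
  ∀ u v, Compatible G σ u v

/-- The largest eigenvalue of a (symmetric) real matrix: the supremum of the set of real
roots of its characteristic polynomial. -/
noncomputable def largestEigenvalue {n : Type*} [Fintype n] [DecidableEq n]
    (M : Matrix n n ℝ) : ℝ :=
  sSup {x : ℝ | M.charpoly.IsRoot x}

/-!
Two paths with the same ends either share an interior vertex, where both split into shorter such
pairs, or together form a cycle (or coincide). So in a balanced graph all `u v`-paths have the same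
sign, and in particular `D^max = D^min`. Conversely, `D^max = D^min` says that all shortest
`u v`-paths have a common sign. Fix a root `r` and let `θ v` be the common sign of the shortest
`r v`-paths. In a bipartite graph the ends of an edge `u v` are at different distances from `r`,
so one of them, say `v`, is at distance `d(r, u) + 1`, and a shortest path to `u` followed by the
edge is a shortest path to `v`; hence `σ u v = θ u * θ v` on every edge, and a closed walk at `u`
has sign `θ u * θ u = 1`.
-/

section

variable {V : Type*} {G : SimpleGraph V} {σ : V → V → ℤ}

section WalkSign

@[simp] lemma walkSign_nil {u : V} : walkSign σ (Walk.nil : G.Walk u u) = 1 := rfl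

@[simp] lemma walkSign_cons {u v w : V} (h : G.Adj u v) (p : G.Walk v w) :
    walkSign σ (Walk.cons h p) = σ u v * walkSign σ p := by
  simp [walkSign]

lemma walkSign_append {u v w : V} (p : G.Walk u v) (q : G.Walk v w) :
    walkSign σ (p.append q) = walkSign σ p * walkSign σ q := by
  simp [walkSign, Walk.darts_append]

lemma walkSign_concat {u v w : V} (p : G.Walk u v) (h : G.Adj v w) :
    walkSign σ (p.concat h) = walkSign σ p * σ v w := by
  simp [Walk.concat_eq_append, walkSign_append]

lemma walkSign_reverse (hσ : IsSignature G σ) {u v : V} (p : G.Walk u v) :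
    walkSign σ p.reverse = walkSign σ p := by
  rw [walkSign, walkSign, Walk.darts_reverse, List.map_reverse, List.prod_reverse, List.map_map]
  exact congrArg List.prod <| List.map_congr_left fun d _ ↦ hσ.1 d.toProd.2 d.toProd.1

lemma walkSign_eq_one_or_eq_neg_one (hσ : IsSignature G σ) {u v : V} (p : G.Walk u v) :
    walkSign σ p = 1 ∨ walkSign σ p = -1 := by
  induction p with
  | nil => exact .inl rfl
  | cons h q ih =>
    rw [walkSign_cons]
    rcases hσ.2 _ _ h with h1 | h1 <;> rcases ih with h2 | h2 <;> simp [h1, h2]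

lemma walkSign_mul_self (hσ : IsSignature G σ) {u v : V} (p : G.Walk u v) :
    walkSign σ p * walkSign σ p = 1 := by
  rcases walkSign_eq_one_or_eq_neg_one hσ p with h | h <;> simp [h]

end WalkSign

section Balanced

open Walk

lemma IsBalanced.walkSign_eq_of_isPath (hσ : IsSignature G σ) (hb : IsBalanced G σ) {u v : V}
    {p q : G.Walk u v} (hp : p.IsPath) (hq : q.IsPath) : walkSign σ p = walkSign σ q := by
  induction hs : p.length using Nat.strongRec generalizing u v with | ind s ih =>
  by_cases! hw : ∃ w, w ∈ p.support ∧ w ∈ q.support ∧ w ≠ u ∧ w ≠ v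
  · classical
    obtain ⟨w, hwp, hwq, hwu, hwv⟩ := hw
    rw [← p.take_spec hwp, ← q.take_spec hwq, walkSign_append, walkSign_append,
      ih _ (hs ▸ length_takeUntil_lt_length hwp hwv) (hp.takeUntil hwp) (hq.takeUntil hwq) rfl,
      ih _ (hs ▸ length_dropUntil_lt_length hwp hwu) (hp.dropUntil hwp) (hq.dropUntil hwq) rfl]
  by_cases hlen : p.length ≤ 1 ∧ q.length ≤ 1
  · rw [eq_of_length_le_one hlen.1 hlen.2]
  have hcycle : (p.append q.reverse).IsCycle := by
    refine hp.isCycle_append (isPath_reverse_iff q |>.mpr hq) (fun _ ↦ ?_) ?_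
    · grind [dropLast_support_concat, IsPath.support_nodup, support_reverse, cons_tail_support]
    · grind [length_reverse]
  have hpq := hb u _ hcycle
  rw [walkSign_append, walkSign_reverse hσ] at hpq
  calc walkSign σ p = walkSign σ p * (walkSign σ q * walkSign σ q) := by
        rw [walkSign_mul_self hσ, mul_one]
    _ = walkSign σ q := by rw [← mul_assoc, hpq, one_mul]

lemma IsBalanced.isCompatibleGraph (hσ : IsSignature G σ) (hb : IsBalanced G σ) :
    IsCompatibleGraph G σ :=
  fun _ _ _ _ hp hq ↦ hb.walkSign_eq_of_isPath hσ hp.1 hq.1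

/-- `σ` is obtained from the all-positive signature by switching at the vertices where `θ = -1`. -/
def IsSwitchingFunction (G : SimpleGraph V) (σ : V → V → ℤ) (θ : V → ℤ) : Prop :=
  (∀ v, θ v * θ v = 1) ∧ ∀ u v, G.Adj u v → σ u v = θ u * θ v

lemma IsSwitchingFunction.walkSign_eq {θ : V → ℤ} (hθ : IsSwitchingFunction G σ θ) {u v : V}
    (p : G.Walk u v) : walkSign σ p = θ u * θ v := by
  induction p with
  | nil => exact (hθ.1 _).symm
  | @cons u w v h p ih =>
    rw [walkSign_cons, ih, hθ.2 u w h]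
    linear_combination θ u * θ v * hθ.1 w

lemma IsSwitchingFunction.isBalanced {θ : V → ℤ} (hθ : IsSwitchingFunction G σ θ) :
    IsBalanced G σ :=
  fun u p _ ↦ (hθ.walkSign_eq p).trans (hθ.1 u)

lemma SimpleGraph.Colorable.dist_ne_dist_of_adj (hbip : G.Colorable 2) (hG : G.Connected)
    (r : V) {u v : V} (h : G.Adj u v) : G.dist r u ≠ G.dist r v := by
  obtain ⟨p, hp⟩ := hG.exists_walk_length_eq_dist r u
  obtain ⟨q, hq⟩ := hG.exists_walk_length_eq_dist r v
  have heven := two_colorable_iff_forall_loop_even.mp hbip r ((p.concat h).append q.reverse)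
  rw [Walk.length_append, Walk.length_concat, Walk.length_reverse, hp, hq] at heven
  intro huv
  rw [huv] at heven
  exact Nat.not_even_iff_odd.mpr (by grind) heven

lemma IsCompatibleGraph.exists_isSwitchingFunction (hσ : IsSignature G σ) (hG : G.Connected)
    (hbip : G.Colorable 2) (hc : IsCompatibleGraph G σ) : ∃ θ, IsSwitchingFunction G σ θ := by
  obtain ⟨r⟩ := hG.nonempty
  choose P hP using fun v ↦ hG.exists_path_of_dist r v
  refine ⟨fun v ↦ walkSign σ (P v), fun v ↦ walkSign_mul_self hσ _, ?_⟩
  have step : ∀ u v (h : G.Adj u v), G.dist r v = G.dist r u + 1 →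
      σ u v = walkSign σ (P u) * walkSign σ (P v) := by
    intro u v h huv
    have hlen : ((P u).concat h).length = G.dist r v := by
      rw [Walk.length_concat, (hP u).2, huv]
    have hsign := hc r v _ _ ⟨Walk.isPath_of_length_eq_dist _ hlen, hlen⟩ (hP v)
    rw [walkSign_concat] at hsign
    linear_combination walkSign σ (P u) * hsign - σ u v * walkSign_mul_self hσ (P u)
  intro u v h
  have hne := hbip.dist_ne_dist_of_adj hG r h
  rcases h.diff_dist_adj (u := r) with huv | huv | huv
  · exact absurd huv.symm hne
  · exact step u v h huv
  · rw [hσ.1, step v u h.symm (by omega), mul_comm]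

lemma isBalanced_iff_isCompatibleGraph (hσ : IsSignature G σ) (hG : G.Connected)
    (hbip : G.Colorable 2) : IsBalanced G σ ↔ IsCompatibleGraph G σ := by
  refine ⟨IsBalanced.isCompatibleGraph hσ, fun hc ↦ ?_⟩
  obtain ⟨θ, hθ⟩ := hc.exists_isSwitchingFunction hσ hG hbip
  exact hθ.isBalanced

end Balanced

section SignedDistance

lemma compatible_self (u : V) : Compatible G σ u u := by
  intro p q hp hq
  rw [Walk.eq_of_length_le_one (p := p) (q := q) (by simp [hp.2]) (by simp [hq.2])]

lemma sigmaMax_eq_sigmaMin_iff (hσ : IsSignature G σ) {u v : V} (h : G.Reachable u v) :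
    sigmaMax G σ u v = sigmaMin G σ u v ↔ Compatible G σ u v := by
  classical
  obtain ⟨p₀, hp₀⟩ := h.exists_path_of_dist
  simp only [sigmaMax, sigmaMin]
  constructor
  · intro heq p q hp hq
    by_cases hall : ∀ p : G.Walk u v, IsShortestPath p → walkSign σ p = 1
    · rw [hall p hp, hall q hq]
    rw [if_neg hall, ite_eq_right_iff] at heq
    have hneg : ∀ p : G.Walk u v, IsShortestPath p → walkSign σ p = -1 := fun p hp ↦
      (walkSign_eq_one_or_eq_neg_one hσ p).resolve_left fun hp1 ↦ by
        simpa using heq ⟨p, hp, hp1⟩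
    rw [hneg p hp, hneg q hq]
  · intro hc
    by_cases hall : ∀ p : G.Walk u v, IsShortestPath p → walkSign σ p = 1
    · rw [if_pos hall, if_pos ⟨p₀, hp₀, hall p₀ hp₀⟩]
    rw [if_neg hall, if_neg]
    rintro ⟨p, hp, hp1⟩
    exact hall fun q hq ↦ (hc q p hq hp).trans hp1

lemma Dmax_eq_Dmin_iff_isCompatibleGraph (hσ : IsSignature G σ) (hG : G.Connected) :
    Dmax G σ = Dmin G σ ↔ IsCompatibleGraph G σ := by
  simp only [← Matrix.ext_iff, Dmax, Dmin, Matrix.of_apply]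
  refine forall₂_congr fun u v ↦ ?_
  rcases eq_or_ne u v with rfl | huv
  · simpa using compatible_self u
  have hdist : (G.dist u v : ℝ) ≠ 0 := by exact_mod_cast (hG.pos_dist_of_ne huv).ne'
  rw [mul_left_inj' hdist, Int.cast_inj, sigmaMax_eq_sigmaMin_iff hσ (hG u v)]

end SignedDistance

end

/-- A signed graph whose underlying simple graph is connected and
bipartite is balanced if and only if `D^max(Σ) = D^min(Σ)`. -/
theorem bipartite_balanced_iff_Dmax_eq_Dmin {V : Type*} (G : SimpleGraph V)
    (σ : V → V → ℤ) (hσ : IsSignature G σ) (hG : G.Connected)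
    (hbip : G.Colorable 2) :
    IsBalanced G σ ↔ Dmax G σ = Dmin G σ :=
  (isBalanced_iff_isCompatibleGraph hσ hG hbip).trans
    (Dmax_eq_Dmin_iff_isCompatibleGraph hσ hG).symm
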